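/- (MAD-Sketch computes the sketch of the exact MAD iterates.) Fix positive integers m, w, d and hash functions h_1, …, h_d : Fin m → Fin w, and let Sk : ℝ^m → ℝ^{d×w} denote the count-min sketching map Sk(y)_{j,c} = Σ_{i : h_j(i) = c} y_i. Let V, W', S, Q, R, μ₁, μ₂, μ₃, M_v, and the exact MAD iterates Y^{(t)} be as in the MAD iteration. Define the MAD-Sketch iteration on sketch matrices by 𝕊^{(t+1)}_v = (1/M_v) ( μ₁ S_v · Sk(Q_v) + μ₂ Σ_{u ∈ V} (W'_{uv} + W'_{vu}) 𝕊^{(t)}_u + μ₃ · Sk(R_v) ), with 𝕊^{(0)}_v = Sk(Q_v). Then for every iteration t ≥ 0 and every node v ∈ V, 𝕊^{(t)}_v = Sk(Y^{(t)}_v). -/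
import Mathlib


open Finset

/-- The count-min sketching map `Sk` of width `w` and depth `d` relative to
hash functions `h j : Fin m → Fin w`: `Sk(y)_{j,c} = ∑_{i : h j i = c} y i`. -/
noncomputable def cmSketch {m w d : ℕ} (h : Fin d → Fin m → Fin w)
    (y : Fin m → ℝ) : Fin d → Fin w → ℝ :=
  fun j c => ∑ i ∈ Finset.univ.filter (fun i => h j i = c), y i

/-- MAD-Sketch computes the sketch of the exact MAD iterates: running the MAD
update directly on count-min sketches yields, at every iteration `t` and node
`v`, exactly the sketch of the exact MAD label scores `Y^{(t)}_v`. -/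
theorem mad_sketch_eq_sketch_of_mad
    (V : Type*) [Fintype V] [DecidableEq V] (m w d : ℕ)
    (hm : 0 < m) (hw : 0 < w) (hd : 0 < d)
    (h : Fin d → Fin m → Fin w)
    (W' : V → V → ℝ) (hW : ∀ u v, 0 ≤ W' u v) (hWdiag : ∀ v, W' v v = 0)
    (S : V → ℝ) (hS : ∀ v, S v = 0 ∨ S v = 1)
    (Q R : V → Fin m → ℝ) (hQ : ∀ v ℓ, 0 ≤ Q v ℓ) (hR : ∀ v ℓ, 0 ≤ R v ℓ)
    (μ₁ μ₂ μ₃ : ℝ) (hμ₁ : 0 < μ₁) (hμ₂ : 0 < μ₂) (hμ₃ : 0 < μ₃)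
    (M : V → ℝ)
    (hM : ∀ v, M v = μ₁ * S v
        + μ₂ * ∑ u ∈ Finset.univ.filter (fun u => u ≠ v), (W' u v + W' v u)
        + μ₃)
    (Y : ℕ → V → Fin m → ℝ)
    (hY0 : Y 0 = Q)
    (hYsucc : ∀ t v ℓ, Y (t + 1) v ℓ =
        (1 / M v) * (μ₁ * S v * Q v ℓ
          + μ₂ * ∑ u, (W' u v + W' v u) * Y t u ℓ
          + μ₃ * R v ℓ))
    (𝕊 : ℕ → V → Fin d → Fin w → ℝ)
    (h𝕊0 : ∀ v, 𝕊 0 v = cmSketch h (Q v))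
    (h𝕊succ : ∀ t v j c, 𝕊 (t + 1) v j c =
        (1 / M v) * (μ₁ * S v * cmSketch h (Q v) j c
          + μ₂ * ∑ u, (W' u v + W' v u) * 𝕊 t u j c
          + μ₃ * cmSketch h (R v) j c)) :
    ∀ (t : ℕ) (v : V), 𝕊 t v = cmSketch h (Y t v) := by
  intro t
  induction t with
  | zero => intro v; rw [h𝕊0, hY0]
  | succ t ih =>
    intro v
    funext j c
    have hsk : ∀ u : V, 𝕊 t u j c = ∑ i ∈ Finset.univ.filter (fun i => h j i = c), Y t u i := by
      intro u; rw [ih u]; rfl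
    rw [h𝕊succ]
    simp only [cmSketch, hYsucc, hsk, mul_add, Finset.mul_sum, Finset.sum_add_distrib]
    congr 1
    rw [Finset.sum_comm]
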